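/- arXiv:1206.3826 — 3 statements merged into one kernel-verified Lean document; each statement's English description precedes it below -/
import Mathlib

section
/- For integers n, m, k ≥ 0 and real x, writing I_{n,m,k}(x) = ∫₀ˣ B_n(z)B_m(z)B_k(z) dz and C_{a,b,c}(x) = B_a(x)B_b(x)B_c(x) - B_a B_b B_c, we have I_{n,m,k}(x)/(n! m! k!) = ∑_{a=0}^{n+m} (-1)^a ∑_{i=0}^{a} C(a,i) · C_{n-a+i, m-i, k+a+1}(x) / ((n-a+i)! (m-i)! (k+a+1)!), where terms in which n-a+i < 0 or m-i < 0 are interpreted as zero. -/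
/-- The `k`-th Bernoulli polynomial evaluated at a real `x`. -/
noncomputable def B (k : ℕ) (x : ℝ) : ℝ :=
  Polynomial.aeval x (Polynomial.bernoulli k)

/-- `C̃_{a,b,c}(x)`: the normalized product-difference of three Bernoulli polynomials,
set to `0` whenever an index is negative. -/
noncomputable def Ct3 (a b c : ℤ) (x : ℝ) : ℝ :=
  if 0 ≤ a ∧ 0 ≤ b ∧ 0 ≤ c then
    (B a.toNat x * B b.toNat x * B c.toNat x -
        B a.toNat 0 * B b.toNat 0 * B c.toNat 0) /
      ((a.toNat.factorial : ℝ) * b.toNat.factorial * c.toNat.factorial)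
  else 0

/-!
Write `b_j = B_j / j!` (zero for `j < 0`), so that `b_j' = b_{j-1}`. Integrating `f * b_k` with
`f = b_n * b_m` by parts `n + m + 1` times, differentiating `f` and integrating `b_k` each time,
gives `∫₀ˣ f b_k = ∑_a (-1)^a [f^{(a)} b_{k+a+1}]₀ˣ`; no remainder is left because `f` is a
polynomial of degree `n + m`. By Leibniz's rule `f^{(a)} = ∑_i C(a,i) b_{n-a+i} b_{m-i}`, which
turns each boundary term into the inner sum of `Ct3` values.
-/

open Finset Nat

section IteratedParts

variable {𝔸 : Type*} [NormedRing 𝔸]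

theorem hasDerivAt_sum_alternating_mul {𝕜 : Type*} [NontriviallyNormedField 𝕜]
    [NormedAlgebra 𝕜 𝔸] {f g : ℕ → 𝕜 → 𝔸}
    (hf : ∀ i x, HasDerivAt (f i) (f (i + 1) x) x)
    (hg : ∀ i x, HasDerivAt (g (i + 1)) (g i x) x) (N : ℕ) (x : 𝕜) :
    HasDerivAt (fun y => ∑ i ∈ range N, (-1) ^ i * (f i y * g (i + 1) y))
      (f 0 x * g 0 x - (-1) ^ N * (f N x * g N x)) x := by
  refine (HasDerivAt.fun_sum fun i _ =>
    ((hf i x).fun_mul (hg i x)).const_mul ((-1 : 𝔸) ^ i)).congr_deriv ?_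
  have htelescope := sum_range_sub' (fun i => (-1 : 𝔸) ^ i * (f i x * g i x)) N
  rw [pow_zero, one_mul] at htelescope
  rw [← htelescope]
  refine sum_congr rfl fun i _ => ?_
  rw [pow_succ]
  noncomm_ring

theorem integral_mul_eq_alternating_sum_of_hasDerivAt [NormedAlgebra ℝ 𝔸] [CompleteSpace 𝔸]
    {f g : ℕ → ℝ → 𝔸} {N : ℕ} (hf : ∀ i x, HasDerivAt (f i) (f (i + 1) x) x)
    (hg : ∀ i x, HasDerivAt (g (i + 1)) (g i x) x) (hfN : ∀ x, f N x = 0) {a b : ℝ}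
    (hint : IntervalIntegrable (fun x => f 0 x * g 0 x) MeasureTheory.volume a b) :
    ∫ x in a..b, f 0 x * g 0 x =
      ∑ i ∈ range N, (-1) ^ i * (f i b * g (i + 1) b - f i a * g (i + 1) a) := by
  rw [intervalIntegral.integral_eq_sub_of_hasDerivAt (fun x _ => by
    simpa [hfN] using hasDerivAt_sum_alternating_mul hf hg N x) hint, ← sum_sub_distrib]
  simp only [mul_sub]

end IteratedParts

section Leibniz

variable {𝕜 𝔸 : Type*} [NontriviallyNormedField 𝕜] [NormedRing 𝔸] [NormedAlgebra 𝕜 𝔸]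

/-- With `u j' = u (j - 1)` and `v j' = v (j - 1)`, this is the `a`-th derivative of
`u p * v q`, by Leibniz's rule. -/
def leibnizSum (u v : ℤ → 𝕜 → 𝔸) (p q : ℤ) (a : ℕ) (x : 𝕜) : 𝔸 :=
  ∑ i ∈ range (a + 1), (a.choose i : 𝔸) * (u (p - a + i) x * v (q - i) x)

omit [NontriviallyNormedField 𝕜] [NormedAlgebra 𝕜 𝔸] in
theorem leibnizSum_zero (u v : ℤ → 𝕜 → 𝔸) (p q : ℤ) (x : 𝕜) :
    leibnizSum u v p q 0 x = u p x * v q x := by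
  simp [leibnizSum]

omit [NontriviallyNormedField 𝕜] [NormedAlgebra 𝕜 𝔸] in
theorem leibnizSum_eq_zero {u v : ℤ → 𝕜 → 𝔸} (hu : ∀ j < 0, u j = 0) (hv : ∀ j < 0, v j = 0)
    (n m : ℕ) (x : 𝕜) : leibnizSum u v n m (n + m + 1) x = 0 := by
  refine sum_eq_zero fun i _ => ?_
  rcases le_or_gt i m with him | hmi
  · rw [hu _ (by push_cast; omega)]; simp
  · rw [hv _ (by omega)]; simp

theorem hasDerivAt_leibnizSum {u v : ℤ → 𝕜 → 𝔸}
    (hu : ∀ j x, HasDerivAt (u j) (u (j - 1) x) x) (hv : ∀ j x, HasDerivAt (v j) (v (j - 1) x) x)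
    (p q : ℤ) (a : ℕ) (x : 𝕜) :
    HasDerivAt (leibnizSum u v p q a) (leibnizSum u v p q (a + 1) x) x := by
  refine (HasDerivAt.fun_sum fun i _ =>
    ((hu _ x).fun_mul (hv _ x)).const_mul (a.choose i : 𝔸)).congr_deriv ?_
  have hpascal := sum_choose_succ_mul (fun i j => u (p - j) x * v (q - i) x) a
  rw [← sum_add_distrib] at hpascal
  rw [leibnizSum]
  convert hpascal.symm using 1
  all_goals refine sum_congr rfl fun i hi => ?_
  · have : i ≤ a := Nat.lt_succ_iff.1 (mem_range.1 hi)
    rw [Nat.cast_sub this, Nat.cast_sub (by omega), mul_add]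
    push_cast
    ring_nf
  · have : i ≤ a + 1 := Nat.lt_succ_iff.1 (mem_range.1 hi)
    rw [Nat.cast_sub this]
    push_cast
    ring_nf

end Leibniz

/-- `Bⱼ(x) / j!`; extending by zero makes `b_j' = b_{j-1}` hold for every `j : ℤ`, `j = 0`
included. -/
noncomputable def scaledBernoulliFun : ℤ → ℝ → ℝ
  | (j : ℕ), x => bernoulliFun j x / j !
  | Int.negSucc _, _ => 0

theorem scaledBernoulliFun_natCast (j : ℕ) (x : ℝ) :
    scaledBernoulliFun j x = bernoulliFun j x / j ! := rfl

theorem scaledBernoulliFun_of_neg {j : ℤ} (hj : j < 0) : scaledBernoulliFun j = 0 := by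
  obtain ⟨p, rfl⟩ := Int.eq_negSucc_of_lt_zero hj
  rfl

@[fun_prop]
theorem continuous_scaledBernoulliFun : ∀ j, Continuous (scaledBernoulliFun j)
  | (j : ℕ) => (continuous_bernoulliFun j).div_const _
  | Int.negSucc _ => continuous_const

theorem hasDerivAt_scaledBernoulliFun :
    ∀ (j : ℤ) (x : ℝ), HasDerivAt (scaledBernoulliFun j) (scaledBernoulliFun (j - 1) x) x
  | 0, x => by
    have hconst : scaledBernoulliFun 0 = fun _ => 1 := by
      ext y
      change bernoulliFun 0 y / (0 ! : ℝ) = 1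
      simp
    rw [hconst, scaledBernoulliFun_of_neg (by norm_num)]
    exact hasDerivAt_const x 1
  | (j + 1 : ℕ), x => by
    have hderiv := (hasDerivAt_bernoulliFun (j + 1) x).div_const ((j + 1) ! : ℝ)
    rw [show ((j + 1 : ℕ) : ℤ) - 1 = j by push_cast; ring, scaledBernoulliFun_natCast]
    refine hderiv.congr_deriv ?_
    rw [Nat.factorial_succ, Nat.add_sub_cancel]
    push_cast
    field_simp
  | Int.negSucc j, x => hasDerivAt_const x 0

theorem B_eq_bernoulliFun (k : ℕ) : B k = bernoulliFun k := by
  ext x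
  rw [B, bernoulliFun, Polynomial.eval_map_algebraMap]

theorem Ct3_eq_sub (p q r : ℤ) (x : ℝ) :
    Ct3 p q r x = scaledBernoulliFun p x * scaledBernoulliFun q x * scaledBernoulliFun r x -
      scaledBernoulliFun p 0 * scaledBernoulliFun q 0 * scaledBernoulliFun r 0 := by
  rw [Ct3]
  split_ifs with h
  · obtain ⟨hp, hq, hr⟩ := h
    lift p to ℕ using hp
    lift q to ℕ using hq
    lift r to ℕ using hr
    simp only [Int.toNat_natCast, scaledBernoulliFun_natCast, B_eq_bernoulliFun]
    field_simp
  · simp only [not_and_or, not_le] at h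
    rcases h with h | h | h <;> simp [scaledBernoulliFun_of_neg h]

theorem sum_choose_mul_Ct3 (p q r : ℤ) (a : ℕ) (x : ℝ) :
    ∑ i ∈ range (a + 1), (a.choose i : ℝ) * Ct3 (p - a + i) (q - i) r x =
      leibnizSum scaledBernoulliFun scaledBernoulliFun p q a x * scaledBernoulliFun r x -
        leibnizSum scaledBernoulliFun scaledBernoulliFun p q a 0 * scaledBernoulliFun r 0 := by
  simp only [Ct3_eq_sub, leibnizSum, sum_mul, mul_sub, sum_sub_distrib, mul_assoc]

theorem integral_prod_three_bernoulli_poly (n m k : ℕ) (x : ℝ) :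
    (∫ z in (0:ℝ)..x, B n z * B m z * B k z) /
        ((n.factorial : ℝ) * m.factorial * k.factorial) =
      ∑ a ∈ Finset.range (n + m + 1), (-1 : ℝ) ^ a *
        ∑ i ∈ Finset.range (a + 1),
          (a.choose i : ℝ) *
            Ct3 ((n : ℤ) - a + i) ((m : ℤ) - i) ((k : ℤ) + a + 1) x := by
  have hparts := integral_mul_eq_alternating_sum_of_hasDerivAt
    (f := leibnizSum scaledBernoulliFun scaledBernoulliFun n m)
    (g := fun a => scaledBernoulliFun (k + a)) (N := n + m + 1)
    (hasDerivAt_leibnizSum hasDerivAt_scaledBernoulliFun hasDerivAt_scaledBernoulliFun n m)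
    (fun a x => by
      simpa only [Nat.cast_succ, ← add_assoc, add_sub_cancel_right] using
        hasDerivAt_scaledBernoulliFun (k + a + 1) x)
    (leibnizSum_eq_zero (fun _ => scaledBernoulliFun_of_neg)
      (fun _ => scaledBernoulliFun_of_neg) n m)
    (Continuous.intervalIntegrable (by simp only [leibnizSum_zero]; fun_prop) 0 x)
  calc (∫ z in (0:ℝ)..x, B n z * B m z * B k z) / ((n ! : ℝ) * m ! * k !)
      = ∫ z in (0:ℝ)..x, leibnizSum scaledBernoulliFun scaledBernoulliFun n m 0 z *
          scaledBernoulliFun (k + (0 : ℕ)) z := by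
        rw [← intervalIntegral.integral_div]
        refine intervalIntegral.integral_congr fun z _ => ?_
        simp only [leibnizSum_zero, Nat.cast_zero, add_zero, scaledBernoulliFun_natCast,
          B_eq_bernoulliFun]
        field_simp
    _ = _ := hparts
    _ = _ := sum_congr rfl fun a _ => by rw [sum_choose_mul_Ct3]; push_cast; ring_nf
end

section
/- For integers r ≥ 1, k_1,…,k_r ≥ 0, real x, and the identities ∫₀ˣ ∏_j B_{k_j}(z) dz = (1/(k_r+1))(∏_{j<r} B_{k_j}(x) · B_{k_r+1}(x) − ∏_{j<r} B_{k_j} · B_{k_r+1}) − (1/(k_r+1)) ∑_{m=1}^{r-1} k_m ∫₀ˣ B_{k_1}(z)⋯B_{k_m−1}(z)⋯B_{k_{r-1}}(z) B_{k_r+1}(z) dz (where in the m-th integral the index k_m is replaced by k_m − 1), this integration-by-parts recurrence holds. -/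
@[fun_prop]
lemma continuous_B (k : ℕ) : Continuous (B k) :=
  (Polynomial.bernoulli k).continuous_aeval

lemma hasDerivAt_B (k : ℕ) (x : ℝ) : HasDerivAt (B k) (k * B (k - 1) x) x := by
  have h := (Polynomial.bernoulli k).hasDerivAt_aeval x
  rwa [Polynomial.derivative_bernoulli, map_mul, map_natCast] at h

lemma prod_B_ite_eq_mul_prod_erase {ι : Type*} [Fintype ι] [DecidableEq ι] (k : ι → ℕ)
    (m : ι) (z : ℝ) :
    ∏ j, B (if j = m then k j - 1 else k j) z =
      B (k m - 1) z * ∏ j ∈ Finset.univ.erase m, B (k j) z := by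
  rw [← Finset.mul_prod_erase _ _ (Finset.mem_univ m), if_pos rfl]
  congr 1
  exact Finset.prod_congr rfl fun j hj => by rw [if_neg (Finset.ne_of_mem_erase hj)]

lemma hasDerivAt_prod_B {ι : Type*} [Fintype ι] [DecidableEq ι] (k : ι → ℕ) (z : ℝ) :
    HasDerivAt (fun z => ∏ j, B (k j) z)
      (∑ m, (k m : ℝ) * ∏ j, B (if j = m then k j - 1 else k j) z) z := by
  refine (HasDerivAt.fun_finsetProd fun j _ => hasDerivAt_B (k j) z).congr_deriv
    (Finset.sum_congr rfl fun m _ => ?_)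
  rw [prod_B_ite_eq_mul_prod_erase, smul_eq_mul]
  ring

/-- Integration-by-parts recurrence for the integral of a product of `r + 1 ≥ 1`
Bernoulli polynomials. -/
theorem integral_prod_bernoulli_poly_parts (r : ℕ) (k : Fin (r + 1) → ℕ) (x : ℝ) :
    ∫ z in (0:ℝ)..x, ∏ j, B (k j) z =
      (1 / ((k (Fin.last r) : ℝ) + 1)) *
        ((∏ j : Fin r, B (k j.castSucc) x) * B (k (Fin.last r) + 1) x -
          (∏ j : Fin r, B (k j.castSucc) 0) * B (k (Fin.last r) + 1) 0) -
      (1 / ((k (Fin.last r) : ℝ) + 1)) *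
        ∑ m : Fin r, (k m.castSucc : ℝ) *
          ∫ z in (0:ℝ)..x,
            (∏ j : Fin r, B (if j = m then k j.castSucc - 1 else k j.castSucc) z) *
              B (k (Fin.last r) + 1) z := by
  set n := k (Fin.last r) with hn
  have hlast (z : ℝ) : HasDerivAt (B (n + 1)) (((n : ℝ) + 1) * B n z) z := by
    simpa using hasDerivAt_B (n + 1) z
  have parts := intervalIntegral.integral_mul_deriv_eq_deriv_mul (a := 0) (b := x)
    (fun z _ => hasDerivAt_prod_B (fun j : Fin r => k j.castSucc) z) (fun z _ => hlast z)
    (by apply Continuous.intervalIntegrable; fun_prop)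
    (by apply Continuous.intervalIntegrable; fun_prop)
  simp only [Finset.sum_mul, mul_assoc] at parts
  rw [intervalIntegral.integral_finsetSum
      fun m _ => by apply Continuous.intervalIntegrable; fun_prop] at parts
  simp only [intervalIntegral.integral_const_mul, mul_left_comm _ ((n : ℝ) + 1)] at parts
  simp only [Fin.prod_univ_castSucc, ← hn]
  rw [← mul_sub, ← parts]
  field_simp
end

section
/- For nonnegative integers k_1,…,k_r, real x, and any permutation σ of {1,…,r}, the quantity T_{k_1,…,k_r}(x) := ∑_{a=0}^{k_1+⋯+k_{r-1}} (-1)^a ∑_{i_1+⋯+i_{r-1}=a} binom(a; i_1,…,i_{r-1}) C̃_{k_1−i_1,…,k_{r-1}−i_{r-1}, k_r+a+1}(x) satisfies T_{k_1,…,k_r}(x) = T_{k_{σ(1)},…,k_{σ(r)}}(x). -/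
/-- `C̃_{m_1,…,m_r}(x)`: the normalized product-difference of Bernoulli polynomials,
set to `0` whenever some index is negative. -/
noncomputable def Ct {r : ℕ} (k : Fin r → ℤ) (x : ℝ) : ℝ :=
  if ∀ j, 0 ≤ k j then
    (∏ j, B (k j).toNat x - ∏ j, B (k j).toNat 0) /
      ∏ j, ((k j).toNat.factorial : ℝ)
  else 0

/-- The right-hand side `T_{k_1,…,k_{r+1}}(x)` of the main formula. -/
noncomputable def T {r : ℕ} (k : Fin (r + 1) → ℕ) (x : ℝ) : ℝ :=
  ∑ a ∈ Finset.range ((∑ j : Fin r, k j.castSucc) + 1), (-1 : ℝ) ^ a *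
    ∑ i ∈ Finset.Nat.antidiagonalTuple r a,
      (Nat.multinomial Finset.univ i : ℝ) *
        Ct (Fin.snoc (fun j : Fin r => (k j.castSucc : ℤ) - i j)
          ((k (Fin.last r) : ℤ) + a + 1)) x

/-! The polynomials `g n = scaledBernoulli n = Bₙ / n!` (and `g n = 0` for `n < 0`) satisfy
`g n' = g (n - 1)`. By the multinomial Leibniz rule, the inner sum over `i` in `T k` is the
value of `Dᵃ Q · g (k_r + a + 1)`, where `Q = ∏_{j<r} g k_j`, minus its value at `0`. Summed
over `a` with the signs `(-1)ᵃ`, this is repeated integration by parts of `∫ Q · g k_r`, and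
the sum stops once `a > deg Q`. Hence `T k x = ∫₀ˣ ∏_j g k_j`, which is symmetric in `k`. -/

open Finset

namespace Polynomial

theorem hasseDeriv_prod {R ι : Type*} [CommSemiring R] [DecidableEq ι] (s : Finset ι)
    (f : ι → R[X]) (k : ℕ) :
    hasseDeriv k (∏ i ∈ s, f i) = ∑ t ∈ s.piAntidiag k, ∏ i ∈ s, hasseDeriv (t i) (f i) := by
  induction s using Finset.cons_induction generalizing k with
  | empty =>
    rcases eq_or_ne k 0 with rfl | hk
    · simp
    · simp [hk, hasseDeriv_apply_one _ (Nat.pos_of_ne_zero hk)]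
  | cons a s has ih =>
    rw [prod_cons, hasseDeriv_mul, piAntidiag_cons, sum_disjiUnion]
    refine sum_congr rfl fun p _ => ?_
    rw [ih, mul_sum, sum_map]
    refine sum_congr rfl fun t ht => ?_
    have hta : t a = 0 := by
      by_contra h
      exact has ((mem_piAntidiag.1 ht).2 a h)
    rw [prod_cons]
    congr 1
    · simp [hta]
    · refine prod_congr rfl fun i hi => ?_
      simp [ne_of_mem_of_not_mem hi has]

theorem iterate_derivative_prod_finset {R ι : Type*} [CommSemiring R] [DecidableEq ι]
    (s : Finset ι) (f : ι → R[X]) (k : ℕ) :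
    derivative^[k] (∏ i ∈ s, f i)
      = ∑ t ∈ s.piAntidiag k, (Nat.multinomial s t : R[X]) * ∏ i ∈ s, derivative^[t i] (f i) := by
  -- `Dᵐ = m! • Hₘ`, and `multinomial s t * ∏ i ∈ s, (t i)! = k!`.
  have hD (m : ℕ) (p : R[X]) : derivative^[m] p = (m.factorial : R[X]) * hasseDeriv m p := by
    rw [← factorial_smul_hasseDeriv, LinearMap.smul_apply, nsmul_eq_mul]
  simp only [hD, prod_mul_distrib, hasseDeriv_prod, mul_sum, ← mul_assoc]
  refine sum_congr rfl fun t ht => ?_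
  rw [← (mem_piAntidiag.1 ht).1, ← Nat.multinomial_spec]
  push_cast
  ring

theorem natDegree_bernoulli_le (n : ℕ) : (bernoulli n).natDegree ≤ n := by
  rw [bernoulli_def]
  exact natDegree_sum_le_of_forall_le _ _ fun i hi =>
    (natDegree_monomial_le _).trans (mem_range_succ_iff.1 hi)

theorem derivative_alternating_sum_iterate_derivative_mul {R : Type*} [CommRing R] (q : R[X])
    (h : ℕ → R[X]) (hh : ∀ a, derivative (h (a + 1)) = h a) (N : ℕ) :
    derivative (∑ a ∈ range N, (-1) ^ a * (derivative^[a] q * h (a + 1)))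
      = q * h 0 - (-1) ^ N * (derivative^[N] q * h N) := by
  induction N with
  | zero => simp
  | succ N ih =>
    rw [sum_range_succ, derivative_add, ih, derivative_mul, derivative_mul, hh,
      Function.iterate_succ_apply']
    simp only [derivative_pow, derivative_neg, derivative_one]
    ring

theorem eval_sub_eval_eq_of_derivative_eq {R : Type*} [CommRing R] [IsAddTorsionFree R]
    {p q : R[X]} (h : derivative p = derivative q) (x y : R) :
    p.eval x - p.eval y = q.eval x - q.eval y := by
  have hc := eq_C_of_derivative_eq_zero (p := p - q) (by rw [derivative_sub, h, sub_self])
  have := congrArg (fun f => f.eval x - f.eval y) hc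
  simp only [eval_sub, eval_C, sub_self] at this
  linear_combination this

end Polynomial

open Polynomial

noncomputable def scaledBernoulli : ℤ → ℝ[X]
  | (n : ℕ) => C (n.factorial : ℝ)⁻¹ * (Polynomial.bernoulli n).map (algebraMap ℚ ℝ)
  | Int.negSucc _ => 0

theorem scaledBernoulli_natCast (n : ℕ) :
    scaledBernoulli n =
      C (n.factorial : ℝ)⁻¹ * (Polynomial.bernoulli n).map (algebraMap ℚ ℝ) :=
  rfl

theorem scaledBernoulli_of_neg {n : ℤ} (hn : n < 0) : scaledBernoulli n = 0 := by
  cases n with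
  | ofNat n => rw [Int.ofNat_eq_natCast] at hn; omega
  | negSucc n => rfl

theorem eval_scaledBernoulli (n : ℕ) (x : ℝ) :
    (scaledBernoulli n).eval x = B n x / n.factorial := by
  rw [scaledBernoulli_natCast, eval_mul, eval_C, eval_map_algebraMap, B, inv_mul_eq_div]

theorem derivative_scaledBernoulli (n : ℤ) :
    derivative (scaledBernoulli n) = scaledBernoulli (n - 1) := by
  obtain hneg | hn := lt_or_ge n 0
  · rw [scaledBernoulli_of_neg hneg, scaledBernoulli_of_neg (by omega), derivative_zero]
  lift n to ℕ using hn with m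
  rcases m with _ | m
  · rw [scaledBernoulli_natCast, scaledBernoulli_of_neg (by norm_num)]
    simp
  · rw [Nat.cast_succ, add_sub_cancel_right, ← Nat.cast_succ, scaledBernoulli_natCast,
      scaledBernoulli_natCast, derivative_C_mul, derivative_map, derivative_bernoulli_add_one,
      Polynomial.map_mul, Polynomial.map_add, Polynomial.map_natCast, Polynomial.map_one,
      ← C_eq_natCast, ← C_1, ← C_add, ← mul_assoc, ← C_mul]
    congr 2
    push_cast [Nat.factorial_succ]
    field_simp

theorem iterate_derivative_scaledBernoulli (n : ℤ) (m : ℕ) :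
    derivative^[m] (scaledBernoulli n) = scaledBernoulli (n - m) := by
  induction m with
  | zero => simp
  | succ m ih =>
    rw [Function.iterate_succ_apply', ih, derivative_scaledBernoulli, Nat.cast_succ,
      sub_add_eq_sub_sub]

theorem natDegree_scaledBernoulli_le (n : ℕ) : (scaledBernoulli n).natDegree ≤ n :=
  (natDegree_C_mul_le _ _).trans ((natDegree_map_le).trans (natDegree_bernoulli_le n))

theorem Ct_eq_eval_sub_eval_zero {s : ℕ} (v : Fin s → ℤ) (x : ℝ) :
    Ct v x = (∏ j, scaledBernoulli (v j)).eval x - (∏ j, scaledBernoulli (v j)).eval 0 := by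
  by_cases hv : ∀ j, 0 ≤ v j
  · have hcast (j : Fin s) : scaledBernoulli (v j) = scaledBernoulli (v j).toNat := by
      rw [Int.toNat_of_nonneg (hv j)]
    simp only [Ct, if_pos hv, hcast, eval_prod, eval_scaledBernoulli, prod_div_distrib, sub_div]
  · obtain ⟨j, hj⟩ := not_forall.1 hv
    rw [Ct, if_neg hv, prod_eq_zero (mem_univ j) (scaledBernoulli_of_neg (not_le.1 hj)),
      eval_zero, eval_zero, sub_zero]

theorem sum_multinomial_mul_prod_scaledBernoulli_sub {r : ℕ} (k : Fin r → ℕ) (a : ℕ) :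
    ∑ i ∈ Nat.antidiagonalTuple r a,
        (Nat.multinomial univ i : ℝ[X]) * ∏ j, scaledBernoulli (k j - i j)
      = derivative^[a] (∏ j, scaledBernoulli (k j)) := by
  simp only [iterate_derivative_prod_finset, iterate_derivative_scaledBernoulli,
    piAntidiag_univ_fin_eq_antidiagonalTuple]

noncomputable def Tpoly {r : ℕ} (k : Fin (r + 1) → ℕ) : ℝ[X] :=
  ∑ a ∈ range ((∑ j : Fin r, k j.castSucc) + 1), (-1) ^ a *
    (derivative^[a] (∏ j : Fin r, scaledBernoulli (k j.castSucc)) *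
      scaledBernoulli ((k (Fin.last r) : ℤ) + (a + 1 : ℕ)))

theorem T_eq_eval_sub_eval_zero {r : ℕ} (k : Fin (r + 1) → ℕ) (x : ℝ) :
    T k x = (Tpoly k).eval x - (Tpoly k).eval 0 := by
  simp only [T, Tpoly, eval_finsetSum, ← sum_sub_distrib]
  refine sum_congr rfl fun a _ => ?_
  set M : ℤ := (k (Fin.last r) : ℤ) + a + 1
  have hpoly : ∑ i ∈ Nat.antidiagonalTuple r a, (Nat.multinomial univ i : ℝ[X]) *
        ∏ j, scaledBernoulli
          ((Fin.snoc (fun j : Fin r => (k j.castSucc : ℤ) - i j) M : Fin (r + 1) → ℤ) j)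
      = derivative^[a] (∏ j : Fin r, scaledBernoulli (k j.castSucc)) * scaledBernoulli M := by
    simp only [Fin.prod_univ_castSucc, Fin.snoc_castSucc, Fin.snoc_last, ← mul_assoc, ← sum_mul,
      sum_multinomial_mul_prod_scaledBernoulli_sub]
  have hM : (k (Fin.last r) : ℤ) + (a + 1 : ℕ) = M := by push_cast; ring
  rw [hM, ← hpoly]
  simp only [Ct_eq_eval_sub_eval_zero, eval_mul, eval_pow, eval_neg, eval_one, eval_finsetSum,
    eval_natCast, mul_sub, sum_sub_distrib]

theorem derivative_Tpoly {r : ℕ} (k : Fin (r + 1) → ℕ) :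
    derivative (Tpoly k) = ∏ j, scaledBernoulli (k j) := by
  have hdeg : (∏ j : Fin r, scaledBernoulli (k j.castSucc)).natDegree
      < ∑ j : Fin r, k j.castSucc + 1 :=
    Nat.lt_succ_of_le (le_trans (natDegree_prod_le _ _)
      (sum_le_sum fun j _ => natDegree_scaledBernoulli_le _))
  rw [Tpoly, derivative_alternating_sum_iterate_derivative_mul _
    (fun a => scaledBernoulli ((k (Fin.last r) : ℤ) + a)), iterate_derivative_eq_zero hdeg,
    Fin.prod_univ_castSucc]
  · simp
  · intro a
    rw [derivative_scaledBernoulli]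
    congr 1
    push_cast
    ring

theorem T_perm_invariant (r : ℕ) (k : Fin (r + 1) → ℕ)
    (σ : Equiv.Perm (Fin (r + 1))) (x : ℝ) :
    T k x = T (k ∘ σ) x := by
  rw [T_eq_eval_sub_eval_zero, T_eq_eval_sub_eval_zero]
  refine eval_sub_eval_eq_of_derivative_eq ?_ x 0
  rw [derivative_Tpoly, derivative_Tpoly]
  exact (Equiv.prod_comp σ fun j => scaledBernoulli (k j)).symm
end
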